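/- Let f and g be ratio-balanced maximum flows, assume A is nonempty, let R = max_{j∈A} r_j^f, assume R > 0 and max_{j∈A} r_j^g ≤ R. Then for every account j with r_j^f = R one also has r_j^g = R. -/

import Mathlib

/-!
Let `T` be the set of accounts at which `f` attains the maximal risk ratio `R`. As `R > 0`,
these accounts have slack under `f`, so maximality of `f` forces every security adjacent to `T`
to be used to capacity, and the ratio constraint forces all of its flow into `T`. Hence `f` brings
into `T` the total value of the neighbours of `T`, which bounds what any feasible `g` brings into
`T`. Then `∑_{j ∈ T} e_j (R - r_j^g)`, the inflow of `g` into `T` minus that of `f`, is `≤ 0`,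
while each term is `≥ 0` since `r^g ≤ R`; so `r_j^g = R` on `T`.
-/

open Finset
open scoped Classical

variable {S A : Type*} [Fintype S] [Fintype A]

/-- A feasible flow: nonnegative on edges, zero off edges, outflow of each security
bounded by its value, inflow of each account bounded by its exposure. -/
def Feasible (E : Finset (S × A)) (v : S → ℝ) (e : A → ℝ) (f : S → A → ℝ) : Prop :=
  (∀ i j, (i, j) ∈ E → 0 ≤ f i j) ∧
  (∀ i j, (i, j) ∉ E → f i j = 0) ∧
  (∀ i : S, ∑ j ∈ Finset.univ.filter (fun j => (i, j) ∈ E), f i j ≤ v i) ∧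
  (∀ j : A, ∑ i ∈ Finset.univ.filter (fun i => (i, j) ∈ E), f i j ≤ e j)

/-- The value of a flow: total flow on all edges. -/
noncomputable def flowValue (E : Finset (S × A)) (f : S → A → ℝ) : ℝ :=
  ∑ p ∈ E, f p.1 p.2

/-- The risk ratio of account `j` under a flow `f`. -/
noncomputable def riskRatio (E : Finset (S × A)) (e : A → ℝ) (f : S → A → ℝ) (j : A) : ℝ :=
  (e j - ∑ i ∈ Finset.univ.filter (fun i => (i, j) ∈ E), f i j) / e j

/-- A maximum flow: feasible, with value maximal among feasible flows. -/
def IsMaxFlow (E : Finset (S × A)) (v : S → ℝ) (e : A → ℝ) (f : S → A → ℝ) : Prop :=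
  Feasible E v e f ∧ ∀ g : S → A → ℝ, Feasible E v e g → flowValue E g ≤ flowValue E f

/-- The ratio constraint: if `f` sends positive flow from `i` to `j` and `i` could
also be used for `l`, then the risk ratio of `j` is at least that of `l`. -/
def RatioConstraint (E : Finset (S × A)) (e : A → ℝ) (f : S → A → ℝ) : Prop :=
  ∀ i j l, (i, j) ∈ E → 0 < f i j → (i, l) ∈ E →
    riskRatio E e f l ≤ riskRatio E e f j

/-- A ratio-balanced (maximum) flow. -/
def RatioBalanced (E : Finset (S × A)) (v : S → ℝ) (e : A → ℝ) (f : S → A → ℝ) : Prop :=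
  IsMaxFlow E v e f ∧ RatioConstraint E e f

/-- The weighted sum of squared risk ratios `∑ j, e j * (r_j^f)^2`. -/
noncomputable def objective (E : Finset (S × A)) (e : A → ℝ) (f : S → A → ℝ) : ℝ :=
  ∑ j : A, e j * (riskRatio E e f j) ^ 2

/-- An MWSR flow: a feasible flow minimizing the weighted sum of squared risk
ratios among all feasible flows. -/
def MWSR (E : Finset (S × A)) (v : S → ℝ) (e : A → ℝ) (f : S → A → ℝ) : Prop :=
  Feasible E v e f ∧ ∀ g : S → A → ℝ, Feasible E v e g → objective E e f ≤ objective E e g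

noncomputable def inflow (E : Finset (S × A)) (f : S → A → ℝ) (j : A) : ℝ :=
  ∑ i ∈ univ.filter (fun i => (i, j) ∈ E), f i j

noncomputable def outflow (E : Finset (S × A)) (f : S → A → ℝ) (i : S) : ℝ :=
  ∑ j ∈ univ.filter (fun j => (i, j) ∈ E), f i j

noncomputable def neighbors (E : Finset (S × A)) (T : Finset A) : Finset S :=
  univ.filter fun i => ∃ j ∈ T, (i, j) ∈ E

noncomputable def addOnEdge (f : S → A → ℝ) (i : S) (j : A) (ε : ℝ) : S → A → ℝ :=
  fun a b => f a b + if (a, b) = (i, j) then ε else 0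

section RiskRatio

variable {S A : Type*} [Fintype S] {E : Finset (S × A)} {e : A → ℝ} {f g : S → A → ℝ}

lemma inflow_eq_mul_one_sub_riskRatio {j : A} (he : e j ≠ 0) :
    inflow E f j = e j * (1 - riskRatio E e f j) := by
  rw [riskRatio, inflow]
  field_simp
  ring

lemma inflow_lt_of_riskRatio_pos {j : A} (he : 0 < e j) (h : 0 < riskRatio E e f j) :
    inflow E f j < e j := by
  rw [inflow_eq_mul_one_sub_riskRatio he.ne', mul_one_sub]
  linarith [mul_pos he h]

lemma riskRatio_eq_of_sum_inflow_le {T : Finset A} {R : ℝ} (he : ∀ j ∈ T, 0 < e j)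
    (hf : ∀ j ∈ T, riskRatio E e f j = R) (hg : ∀ j ∈ T, riskRatio E e g j ≤ R)
    (hsum : ∑ j ∈ T, inflow E g j ≤ ∑ j ∈ T, inflow E f j) :
    ∀ j ∈ T, riskRatio E e g j = R := by
  have hterm : ∀ j ∈ T, e j * (R - riskRatio E e g j) = inflow E g j - inflow E f j := by
    intro j hj
    rw [inflow_eq_mul_one_sub_riskRatio (he j hj).ne', inflow_eq_mul_one_sub_riskRatio (he j hj).ne',
      hf j hj]
    ring
  have hnonneg : ∀ j ∈ T, 0 ≤ e j * (R - riskRatio E e g j) := fun j hj =>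
    mul_nonneg (he j hj).le (sub_nonneg.2 (hg j hj))
  have hzero : ∑ j ∈ T, e j * (R - riskRatio E e g j) = 0 := by
    refine le_antisymm ?_ (sum_nonneg hnonneg)
    rw [sum_congr rfl hterm, sum_sub_distrib]
    linarith
  intro j hj
  rcases mul_eq_zero.1 ((sum_eq_zero_iff_of_nonneg hnonneg).1 hzero j hj) with h | h
  · exact absurd h (he j hj).ne'
  · linarith

end RiskRatio

section AddOnEdge

variable {S A : Type*} {E : Finset (S × A)} {f : S → A → ℝ} {i : S} {j : A}

lemma outflow_addOnEdge [Fintype A] (hij : (i, j) ∈ E) (ε : ℝ) (a : S) :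
    outflow E (addOnEdge f i j ε) a = outflow E f a + if a = i then ε else 0 := by
  rcases eq_or_ne a i with rfl | ha
  · simp [outflow, addOnEdge, sum_add_distrib, hij]
  · simp [outflow, addOnEdge, ha]

lemma inflow_addOnEdge [Fintype S] (hij : (i, j) ∈ E) (ε : ℝ) (b : A) :
    inflow E (addOnEdge f i j ε) b = inflow E f b + if b = j then ε else 0 := by
  rcases eq_or_ne b j with rfl | hb
  · simp [inflow, addOnEdge, sum_add_distrib, hij]
  · simp [inflow, addOnEdge, hb]

lemma flowValue_addOnEdge (hij : (i, j) ∈ E) (ε : ℝ) :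
    flowValue E (addOnEdge f i j ε) = flowValue E f + ε := by
  simp [flowValue, addOnEdge, sum_add_distrib, hij]

end AddOnEdge

section Feasible

variable {E : Finset (S × A)} {v : S → ℝ} {e : A → ℝ} {f : S → A → ℝ}

lemma Feasible.eq_zero_of_notMem {i : S} {j : A} (hf : Feasible E v e f) (hij : (i, j) ∉ E) :
    f i j = 0 :=
  hf.2.1 i j hij

lemma Feasible.nonneg (hf : Feasible E v e f) (i : S) (j : A) : 0 ≤ f i j := by
  by_cases h : (i, j) ∈ E
  · exact hf.1 i j h
  · exact (hf.eq_zero_of_notMem h).ge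

lemma Feasible.outflow_le (hf : Feasible E v e f) (i : S) : outflow E f i ≤ v i := hf.2.2.1 i

lemma Feasible.inflow_le (hf : Feasible E v e f) (j : A) : inflow E f j ≤ e j := hf.2.2.2 j

lemma Feasible.outflow_eq_sum (hf : Feasible E v e f) (i : S) :
    outflow E f i = ∑ j, f i j :=
  sum_filter_of_ne fun _ _ h => by_contra (h ∘ hf.eq_zero_of_notMem)

lemma Feasible.inflow_eq_sum (hf : Feasible E v e f) (j : A) :
    inflow E f j = ∑ i, f i j :=
  sum_filter_of_ne fun _ _ h => by_contra (h ∘ hf.eq_zero_of_notMem)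

lemma Feasible.addOnEdge {i : S} {j : A} {ε : ℝ} (hf : Feasible E v e f) (hij : (i, j) ∈ E)
    (hε : 0 ≤ ε) (hv : ε ≤ v i - outflow E f i) (he : ε ≤ e j - inflow E f j) :
    Feasible E v e (addOnEdge f i j ε) := by
  refine ⟨fun a b hab => ?_, fun a b hab => ?_, fun a => ?_, fun b => ?_⟩
  · have := hf.nonneg a b
    simp only [_root_.addOnEdge]
    split_ifs <;> linarith
  · have hne : (a, b) ≠ (i, j) := fun h => hab (h ▸ hij)
    simp only [_root_.addOnEdge, if_neg hne, add_zero, hf.eq_zero_of_notMem hab]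
  · rw [← outflow, outflow_addOnEdge hij]
    split_ifs with ha
    · subst ha; linarith
    · simpa using hf.outflow_le a
  · rw [← inflow, inflow_addOnEdge hij]
    split_ifs with hb
    · subst hb; linarith
    · simpa using hf.inflow_le b

lemma Feasible.sum_inflow_eq_sum_neighbors (hf : Feasible E v e f) (T : Finset A) :
    ∑ j ∈ T, inflow E f j = ∑ i ∈ neighbors E T, ∑ j ∈ T, f i j := by
  simp_rw [hf.inflow_eq_sum]
  rw [sum_comm]
  refine (sum_subset (subset_univ _) fun i _ hi => sum_eq_zero fun j hj => ?_).symm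
  exact hf.eq_zero_of_notMem fun hij => hi (mem_filter.2 ⟨mem_univ i, j, hj, hij⟩)

lemma Feasible.sum_inflow_le (hf : Feasible E v e f) (T : Finset A) :
    ∑ j ∈ T, inflow E f j ≤ ∑ i ∈ neighbors E T, v i := by
  rw [hf.sum_inflow_eq_sum_neighbors]
  refine sum_le_sum fun i _ => ?_
  calc ∑ j ∈ T, f i j ≤ ∑ j, f i j :=
        sum_le_sum_of_subset_of_nonneg (subset_univ T) fun j _ _ => hf.nonneg i j
    _ = outflow E f i := (hf.outflow_eq_sum i).symm
    _ ≤ v i := hf.outflow_le i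

lemma Feasible.sum_inflow_eq_of_saturated (hf : Feasible E v e f) (T : Finset A)
    (hsat : ∀ i ∈ neighbors E T, outflow E f i = v i)
    (hinto : ∀ i ∈ neighbors E T, ∀ j ∉ T, f i j = 0) :
    ∑ j ∈ T, inflow E f j = ∑ i ∈ neighbors E T, v i := by
  rw [hf.sum_inflow_eq_sum_neighbors]
  refine sum_congr rfl fun i hi => ?_
  rw [← hsat i hi, hf.outflow_eq_sum]
  exact sum_subset (subset_univ T) fun j _ hj => hinto i hi j hj

/-- Otherwise `f` could be augmented along the edge `(i, j)`. -/
lemma IsMaxFlow.outflow_eq_of_inflow_lt {i : S} {j : A} (hf : IsMaxFlow E v e f)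
    (hij : (i, j) ∈ E) (hj : inflow E f j < e j) : outflow E f i = v i := by
  by_contra hne
  have hi : outflow E f i < v i := lt_of_le_of_ne (hf.1.outflow_le i) hne
  have hε : 0 < min (v i - outflow E f i) (e j - inflow E f j) :=
    lt_min (sub_pos.2 hi) (sub_pos.2 hj)
  have hmax := hf.2 _ (hf.1.addOnEdge hij hε.le (min_le_left _ _) (min_le_right _ _))
  rw [flowValue_addOnEdge hij] at hmax
  linarith

lemma RatioConstraint.eq_zero_of_riskRatio_lt (hr : RatioConstraint E e f)
    (hf : Feasible E v e f) {i : S} {j l : A} (hij : (i, j) ∈ E)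
    (hl : riskRatio E e f l < riskRatio E e f j) : f i l = 0 := by
  by_contra hne
  by_cases hil : (i, l) ∈ E
  · exact hl.not_ge (hr i l j hil ((hf.nonneg i l).lt_of_ne' hne) hij)
  · exact hne (hf.eq_zero_of_notMem hil)

end Feasible

theorem maxRatio_agree_general [Nonempty A] (E : Finset (S × A)) (v : S → ℝ) (e : A → ℝ)
    (he : ∀ j, 0 < e j)
    (f g : S → A → ℝ) (hf : RatioBalanced E v e f) (hg : RatioBalanced E v e g)
    (R : ℝ) (hRdef : R = Finset.univ.sup' Finset.univ_nonempty (riskRatio E e f))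
    (hRpos : 0 < R)
    (hgR : Finset.univ.sup' Finset.univ_nonempty (riskRatio E e g) ≤ R) :
    ∀ j : A, riskRatio E e f j = R → riskRatio E e g j = R := by
  obtain ⟨hf_max, hf_ratio⟩ := hf
  have hfR : ∀ j, riskRatio E e f j ≤ R := fun j => hRdef ▸ le_sup' _ (mem_univ j)
  have hgR' : ∀ j, riskRatio E e g j ≤ R := fun j => (le_sup' _ (mem_univ j)).trans hgR
  set T := univ.filter fun j => riskRatio E e f j = R
  have hT : ∀ j ∈ T, riskRatio E e f j = R := fun j hj => (mem_filter.1 hj).2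
  have hsat : ∀ i ∈ neighbors E T, outflow E f i = v i := by
    intro i hi
    obtain ⟨j, hj, hij⟩ := (mem_filter.1 hi).2
    exact hf_max.outflow_eq_of_inflow_lt hij (inflow_lt_of_riskRatio_pos (he j) (hT j hj ▸ hRpos))
  have hinto : ∀ i ∈ neighbors E T, ∀ l ∉ T, f i l = 0 := by
    intro i hi l hl
    obtain ⟨j, hj, hij⟩ := (mem_filter.1 hi).2
    refine hf_ratio.eq_zero_of_riskRatio_lt hf_max.1 hij (hT j hj ▸ (hfR l).lt_of_ne ?_)
    exact fun h => hl (mem_filter.2 ⟨mem_univ l, h⟩)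
  have hinflow : ∑ j ∈ T, inflow E g j ≤ ∑ j ∈ T, inflow E f j :=
    hf_max.1.sum_inflow_eq_of_saturated T hsat hinto ▸ hg.1.1.sum_inflow_le T
  intro j hj
  exact riskRatio_eq_of_sum_inflow_le (fun j _ => he j) hT (fun j _ => hgR' j) hinflow j
    (mem_filter.2 ⟨mem_univ j, hj⟩)

/-- if `f` and `g` are ratio-balanced, `R = max_j r_j^f > 0` and
all risk ratios of `g` are at most `R`, then `r_j^g = R` whenever `r_j^f = R`. -/
theorem maxRatio_agree [Nonempty A] (E : Finset (S × A)) (v : S → ℝ) (e : A → ℝ)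
    (hv : ∀ i, 0 ≤ v i) (he : ∀ j, 0 < e j)
    (f g : S → A → ℝ) (hf : RatioBalanced E v e f) (hg : RatioBalanced E v e g)
    (R : ℝ) (hRdef : R = Finset.univ.sup' Finset.univ_nonempty (riskRatio E e f))
    (hRpos : 0 < R)
    (hgR : Finset.univ.sup' Finset.univ_nonempty (riskRatio E e g) ≤ R) :
    ∀ j : A, riskRatio E e f j = R → riskRatio E e g j = R :=
  maxRatio_agree_general E v e he f g hf hg R hRdef hRpos hgR
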